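/- arXiv:2601.18143 — 5 statements merged into one kernel-verified Lean document; each statement's English description precedes it below -/
import Mathlib

section
/- Let A ∈ Mat_n(F) and Λ = [[p,q],[r,s]] be a super-eigenvalue of A, i.e., there exist linearly independent vectors u, v ∈ F^n with Au = pu + qv and Av = ru + sv. Then det((A − pI)(A − sI) − qrI) = 0. -/
open Matrix

theorem stmt_4 {F : Type*} [Field F] {n : ℕ} (A : Matrix (Fin n) (Fin n) F)
    (p q r s : F) (u v : Fin n → F)
    (hind : LinearIndependent F ![u, v])
    (hu : A.mulVec u = p • u + q • v)
    (hv : A.mulVec v = r • u + s • v) :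
    ((A - p • (1 : Matrix (Fin n) (Fin n) F)) * (A - s • 1) - (q * r) • 1).det = 0 := by
  have hu0 : u ≠ 0 := by
    have := hind.ne_zero 0
    simpa using this
  rw [← Matrix.exists_mulVec_eq_zero_iff]
  refine ⟨u, hu0, ?_⟩
  have h1 : (A - s • (1 : Matrix (Fin n) (Fin n) F)).mulVec u = (p - s) • u + q • v := by
    simp [Matrix.sub_mulVec, Matrix.smul_mulVec, hu, sub_smul]
    module
  rw [Matrix.sub_mulVec, ← Matrix.mulVec_mulVec, h1]
  simp [Matrix.sub_mulVec, Matrix.mulVec_add, Matrix.mulVec_smul, hu, hv,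
    Matrix.smul_mulVec]
  module
end

section
/- Let F be a field of characteristic ≠ 2, A ∈ Mat_n(F), and Λ = [[p,q],[r,s]] a 2×2 matrix such that det(p_Λ(A)) = 0 and the characteristic polynomial p_Λ(T) = T² − (p+s)T + (ps−qr) is irreducible over F. Then there exist linearly independent vectors u, v ∈ F^n with Au = pu + qv and Av = ru + sv, and the subspace W = span(u,v) contains no eigenvector of A. -/
open Matrix Polynomial

lemma no_root_aux {F : Type*} [Field F] (p q r s : F)
    (hirr : Irreducible (X ^ 2 - C (p + s) * X + C (p * s - q * r))) :
    ∀ c : F, c ^ 2 - (p + s) * c + (p * s - q * r) ≠ 0 := by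
  intro c hc
  set P : F[X] := X ^ 2 - C (p + s) * X + C (p * s - q * r) with hP
  have hroot : P.IsRoot c := by simp [hP, IsRoot, hc]
  obtain ⟨g, hg⟩ := (dvd_iff_isRoot).2 hroot
  have hdeg : P.natDegree = 2 := by
    rw [hP]; compute_degree!
  rcases hirr.isUnit_or_isUnit hg with h | h
  · exact Polynomial.not_isUnit_X_sub_C c h
  · obtain ⟨a, haU, ha⟩ := Polynomial.isUnit_iff.1 h
    have ha0 : (C a : F[X]) ≠ 0 := by simpa using haU.ne_zero
    rw [hg, ← ha, natDegree_mul (X_sub_C_ne_zero c) ha0] at hdeg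
    simp [natDegree_X_sub_C] at hdeg

theorem stmt_6 {F : Type*} [Field F] (hchar : (2 : F) ≠ 0) {n : ℕ}
    (A : Matrix (Fin n) (Fin n) F) (p q r s : F)
    (hdet : (A * A - (p + s) • A + (p * s - q * r) • (1 : Matrix (Fin n) (Fin n) F)).det = 0)
    (hirr : Irreducible (X ^ 2 - C (p + s) * X + C (p * s - q * r))) :
    ∃ u v : Fin n → F, LinearIndependent F ![u, v] ∧
      A.mulVec u = p • u + q • v ∧ A.mulVec v = r • u + s • v ∧
      ∀ w ∈ Submodule.span F {u, v}, w ≠ 0 → ∀ c : F, A.mulVec w ≠ c • w := by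
  have hroot := no_root_aux p q r s hirr
  have hq : q ≠ 0 := by
    intro h
    exact hroot p (by rw [h]; ring)
  have hr : r ≠ 0 := by
    intro h
    exact hroot p (by rw [h]; ring)
  obtain ⟨u, hu0, hMu⟩ := (Matrix.exists_mulVec_eq_zero_iff).2 hdet
  set v : Fin n → F := q⁻¹ • (A.mulVec u - p • u) with hv
  have hAu : A.mulVec u = p • u + q • v := by
    rw [hv, smul_smul, mul_inv_cancel₀ hq, one_smul]
    abel
  -- expand the kernel equation
  have hkey : A.mulVec (A.mulVec u) - (p + s) • A.mulVec u
      + (p * s - q * r) • u = 0 := by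
    have := hMu
    rwa [Matrix.add_mulVec, Matrix.sub_mulVec, Matrix.smul_mulVec,
      Matrix.smul_mulVec, Matrix.one_mulVec, ← Matrix.mulVec_mulVec] at this
  have hAv : A.mulVec v = r • u + s • v := by
    rw [hv, Matrix.mulVec_smul, Matrix.mulVec_sub, Matrix.mulVec_smul]
    have h2 : A.mulVec (A.mulVec u) = (p + s) • A.mulVec u - (p * s - q * r) • u := by
      linear_combination (norm := module) hkey
    rw [h2, hAu]
    funext i
    simp only [Pi.smul_apply, Pi.add_apply, Pi.sub_apply, smul_eq_mul]
    field_simp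
    ring
  have hindep : LinearIndependent F ![u, v] := by
    rw [LinearIndependent.pair_iff]
    intro a b hab
    by_cases hb : b = 0
    · subst hb
      simp only [zero_smul, add_zero] at hab
      rcases smul_eq_zero.1 hab with h | h
      · exact ⟨h, rfl⟩
      · exact absurd h hu0
    · exfalso
      have hveq : v = (-a / b) • u := by
        have hbv : b • v = -a • u := by linear_combination (norm := module) hab
        funext i
        have hbv' := congrFun hbv i
        simp only [Pi.smul_apply, smul_eq_mul, neg_mul] at hbv' ⊢
        field_simp
        linear_combination hbv'
      -- then u is an eigenvector with eigenvalue c = p + q * (-a/b)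
      set c : F := p + q * (-a / b) with hc
      have hAuc : A.mulVec u = c • u := by
        rw [hAu, hveq, smul_smul, hc, ← add_smul]
      apply hroot c
      -- plug into kernel equation
      have h2 : A.mulVec (A.mulVec u) = (c * c) • u := by
        rw [hAuc, Matrix.mulVec_smul, hAuc, smul_smul]
      rw [h2, hAuc] at hkey
      have : (c * c - (p + s) * c + (p * s - q * r)) • u = 0 := by
        rw [← hkey]
        module
      rcases smul_eq_zero.1 this with h | h
      · rw [← h]; ring
      · exact absurd h hu0
  refine ⟨u, v, hindep, hAu, hAv, ?_⟩
  intro w hw hw0 c hAw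
  obtain ⟨a, b, hab⟩ := Submodule.mem_span_pair.1 hw
  subst hab
  rw [Matrix.mulVec_add, Matrix.mulVec_smul, Matrix.mulVec_smul, hAu, hAv] at hAw
  have hcoef : (a * p + b * r - c * a) • u + (a * q + b * s - c * b) • v = 0 := by
    rw [smul_add, smul_smul] at hAw
    linear_combination (norm := module) hAw
  obtain ⟨h1, h2⟩ := LinearIndependent.pair_iff.1 hindep _ _ hcoef
  have e1 : a * p + b * r = c * a := by linear_combination h1
  have e2 : a * q + b * s = c * b := by linear_combination h2
  by_cases hb : b = 0
  · subst hb
    have ha : a ≠ 0 := by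
      rintro rfl
      simp at hw0
    have haq : a * q = 0 := by linear_combination e2
    rcases mul_eq_zero.1 haq with h | h
    · exact ha h
    · exact hq h
  · by_cases ha : a = 0
    · subst ha
      have hbr : b * r = 0 := by linear_combination e1
      rcases mul_eq_zero.1 hbr with h | h
      · exact hb h
      · exact hr h
    · apply hroot c
      have k1 : (c - p) * a = b * r := by linear_combination -e1
      have k2 : (c - s) * b = a * q := by linear_combination -e2
      have : (c - p) * (c - s) * (a * b) = q * r * (a * b) := by
        calc (c - p) * (c - s) * (a * b) = ((c - p) * a) * ((c - s) * b) := by ring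
        _ = (b * r) * (a * q) := by rw [k1, k2]
        _ = q * r * (a * b) := by ring
      have hab : a * b ≠ 0 := mul_ne_zero ha hb
      have := mul_right_cancel₀ hab this
      linear_combination this
end

section
/- Let F be a field of characteristic ≠ 2, A ∈ Mat_n(F), and let Λ be a proper super-eigenvalue of A, i.e., Λ = [[p,q],[r,s]] with linearly independent u, v ∈ F^n satisfying Au = pu + qv, Av = ru + sv, such that span(u,v) contains no eigenvector of A. Then the characteristic polynomial p_Λ(T) of Λ is irreducible over F. -/
open Matrix Polynomial

theorem stmt_7 {F : Type*} [Field F] (hchar : (2 : F) ≠ 0) {n : ℕ}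
    (A : Matrix (Fin n) (Fin n) F) (p q r s : F) (u v : Fin n → F)
    (hind : LinearIndependent F ![u, v])
    (hu : A.mulVec u = p • u + q • v)
    (hv : A.mulVec v = r • u + s • v)
    (hproper : ∀ w ∈ Submodule.span F {u, v}, w ≠ 0 → ∀ c : F, A.mulVec w ≠ c • w) :
    Irreducible (X ^ 2 - C (p + s) * X + C (p * s - q * r)) := by
  set P : F[X] := X ^ 2 - C (p + s) * X + C (p * s - q * r) with hP
  have hdeg : P.natDegree = 2 := by
    rw [hP]; compute_degree!
  rw [irreducible_iff_roots_eq_zero_of_degree_le_three (by omega) (by omega)]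
  rw [Multiset.eq_zero_iff_forall_notMem]
  intro c hc
  have hP0 : P ≠ 0 := fun h => by simp [h] at hdeg
  rw [mem_roots hP0] at hc
  have hcc : c ^ 2 - (p + s) * c + (p * s - q * r) = 0 := by
    simpa [hP, IsRoot] using hc
  -- find (a, b) ≠ 0 with a*p + b*r = c*a and a*q + b*s = c*b
  obtain ⟨a, b, hab, h1, h2⟩ : ∃ a b : F, ¬(a = 0 ∧ b = 0) ∧
      a * p + b * r = c * a ∧ a * q + b * s = c * b := by
    by_cases hq1 : c - s = 0 ∧ q = 0
    · by_cases hq2 : r = 0 ∧ c - p = 0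
      · exact ⟨0, 1, by simp, by rw [hq2.1]; ring,
          by rw [hq1.2]; linear_combination -hq1.1⟩
      · exact ⟨r, c - p, hq2, by ring, by linear_combination -hcc⟩
    · exact ⟨c - s, q, hq1, by linear_combination -hcc, by ring⟩
  set w := a • u + b • v with hw
  have hwmem : w ∈ Submodule.span F {u, v} := by
    apply Submodule.add_mem <;> apply Submodule.smul_mem <;>
      apply Submodule.subset_span <;> simp
  have hw0 : w ≠ 0 := by
    intro h
    exact hab (LinearIndependent.pair_iff.mp hind a b (by rw [← hw]; exact h))
  refine hproper w hwmem hw0 c ?_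
  have : A.mulVec w = (a * p + b * r) • u + (a * q + b * s) • v := by
    rw [hw, mulVec_add, mulVec_smul, mulVec_smul, hu, hv]
    simp [smul_add, smul_smul]
    module
  rw [this, h1, h2, hw]
  simp [smul_add, smul_smul]
end

section
/- Let F be a field of characteristic ≠ 2 and A ∈ Mat_n(F). Suppose p_A(T) = (T² + λT + μ)·q(T) where T² + λT + μ is irreducible over F. Then there exist linearly independent vectors u, v ∈ F^n with Au = −λu + v and Av = −μu; in particular, the matrix Λ = [[−λ, 1],[−μ, 0]] is a proper super-eigenvalue of A, and the subspace span(u,v) contains no eigenvector of A. -/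
open Matrix Polynomial



lemma eval_charpoly_det' {K : Type*} [CommRing K] {m : ℕ} (M : Matrix (Fin m) (Fin m) K) (x : K) :
    M.charpoly.eval x = (x • (1 : Matrix (Fin m) (Fin m) K) - M).det := by
  rw [Matrix.charpoly, eval_det, matPolyEquiv_charmatrix]
  simp [smul_one_eq_diagonal]

lemma det_quad_zero {F : Type*} [Field F] {n : ℕ}
    (A : Matrix (Fin n) (Fin n) F) (lam mu : F) (Q : F[X])
    (hfac : A.charpoly = (X ^ 2 + C lam * X + C mu) * Q) :
    (A * A + lam • A + mu • (1 : Matrix (Fin n) (Fin n) F)).det = 0 := by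
  set K := AlgebraicClosure F
  set f : F →+* K := algebraMap F K with hf
  set A' : Matrix (Fin n) (Fin n) K := A.map f with hA'
  -- quadratic has a root over K
  have hdegq : ((X ^ 2 + C lam * X + C mu : F[X]).map f).degree ≠ 0 := by
    rw [Polynomial.degree_map]
    have : (X ^ 2 + C lam * X + C mu : F[X]).degree = 2 := by
      have h1 : (X ^ 2 + C lam * X + C mu : F[X]) = C 1 * X ^ 2 + C lam * X + C mu := by
        simp
      rw [h1, Polynomial.degree_quadratic one_ne_zero]
    simp [this]
  obtain ⟨α, hα⟩ := IsAlgClosed.exists_root _ hdegq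
  have hα' : α ^ 2 + f lam * α + f mu = 0 := by
    have := hα
    simp [Polynomial.IsRoot, Polynomial.eval_map, Polynomial.eval₂_add, Polynomial.eval₂_mul] at this
    simpa using this
  set β : K := -f lam - α with hβdef
  have hsum : α + β = -f lam := by rw [hβdef]; ring
  have hprod : α * β = f mu := by rw [hβdef]; linear_combination -hα'
  have hβ' : β ^ 2 + f lam * β + f mu = 0 := by rw [hβdef]; linear_combination hα'
  -- charpoly of A'
  have hcp : A'.charpoly = ((X ^ 2 + C lam * X + C mu : F[X]).map f) * (Q.map f) := by
    rw [hA', Matrix.charpoly_map, hfac, Polynomial.map_mul]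
  -- α and β are roots of charpoly A'
  have hdetα : (A' - α • 1).det = 0 := by
    have h0 : A'.charpoly.eval α = 0 := by
      rw [hcp]
      simp [Polynomial.eval_map]
      left
      simpa using hα'
    rw [eval_charpoly_det'] at h0
    rw [← neg_sub, Matrix.det_neg, h0, mul_zero]
  have hdetβ : (A' - β • 1).det = 0 := by
    have h0 : A'.charpoly.eval β = 0 := by
      rw [hcp]
      simp [Polynomial.eval_map]
      left
      simpa using hβ'
    rw [eval_charpoly_det'] at h0
    rw [← neg_sub, Matrix.det_neg, h0, mul_zero]
  -- map of the quadratic matrix factors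
  have hMmap : (A * A + lam • A + mu • (1 : Matrix (Fin n) (Fin n) F)).map f
      = (A' - α • 1) * (A' - β • 1) := by
    have h1 : ∀ a b : K, (A' - a • 1) * (A' - b • 1) = A' * A' - (a + b) • A' + (a * b) • 1 := by
      intro a b
      simp only [mul_sub, sub_mul, smul_mul_assoc, mul_smul_comm, smul_smul, mul_one, one_mul, smul_sub,
        add_smul]
      rw [mul_comm b a]
      abel
    rw [h1, hsum, hprod]
    ext i j
    simp [hA', Matrix.map_apply, Matrix.mul_apply, Matrix.one_apply, map_sum, apply_ite f,
      smul_eq_mul, mul_comm]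
  have hdet0 : f (A * A + lam • A + mu • (1 : Matrix (Fin n) (Fin n) F)).det = 0 := by
    rw [RingHom.map_det, RingHom.mapMatrix_apply, hMmap, Matrix.det_mul, hdetα, zero_mul]
  exact f.injective.eq_iff.mp (by simpa using hdet0)

theorem stmt_9 {F : Type*} [Field F] (hchar : (2 : F) ≠ 0) {n : ℕ}
    (A : Matrix (Fin n) (Fin n) F) (lam mu : F) (Q : F[X])
    (hfac : A.charpoly = (X ^ 2 + C lam * X + C mu) * Q)
    (hirr : Irreducible (X ^ 2 + C lam * X + C mu)) :
    ∃ u v : Fin n → F, LinearIndependent F ![u, v] ∧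
      A.mulVec u = -lam • u + v ∧ A.mulVec v = -mu • u ∧
      ∀ w ∈ Submodule.span F {u, v}, w ≠ 0 → ∀ c : F, A.mulVec w ≠ c • w := by
  classical
  -- the quadratic has no roots in F
  have hroot : ∀ c : F, c * c + lam * c + mu ≠ 0 := by
    intro c hc
    have hdvd : (X - C c) ∣ (X ^ 2 + C lam * X + C mu : F[X]) := by
      refine dvd_iff_isRoot.mpr ?_
      simp only [IsRoot, eval_add, eval_mul, eval_pow, eval_X, eval_C]
      linear_combination hc
    obtain ⟨g, hg⟩ := hdvd
    rcases hirr.isUnit_or_isUnit hg with h | h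
    · exact Polynomial.not_isUnit_X_sub_C c h
    · have hdg : g.degree = 0 := degree_eq_zero_of_isUnit h
      have h2 : (X ^ 2 + C lam * X + C mu : F[X]).degree = 2 := by
        have h1 : (X ^ 2 + C lam * X + C mu : F[X]) = C 1 * X ^ 2 + C lam * X + C mu := by simp
        rw [h1, Polynomial.degree_quadratic one_ne_zero]
      rw [hg, degree_mul, degree_X_sub_C, hdg] at h2
      norm_num at h2
  -- nontrivial kernel of A² + λA + μ
  obtain ⟨u, hu0, hu⟩ := (Matrix.exists_mulVec_eq_zero_iff).mpr (det_quad_zero A lam mu Q hfac)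
  have key : A.mulVec (A.mulVec u) + lam • A.mulVec u + mu • u = 0 := by
    have := hu
    rw [Matrix.add_mulVec, Matrix.add_mulVec, Matrix.smul_mulVec,
      Matrix.smul_mulVec, Matrix.one_mulVec, ← Matrix.mulVec_mulVec] at this
    exact this
  set v : Fin n → F := A.mulVec u + lam • u with hv
  have h1 : A.mulVec u = -lam • u + v := by rw [hv]; module
  have h2 : A.mulVec v = -mu • u := by
    rw [hv, Matrix.mulVec_add, Matrix.mulVec_smul]
    have : A.mulVec (A.mulVec u) + lam • A.mulVec u = -mu • u := by
      linear_combination (norm := module) key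
    exact this
  have hAu_ne : ∀ c : F, A.mulVec u ≠ c • u := by
    intro c hc
    have : (c * c + lam * c + mu) • u = 0 := by
      have h3 : A.mulVec (A.mulVec u) = (c * c) • u := by
        rw [hc, Matrix.mulVec_smul, hc, smul_smul]
      rw [h3, hc] at key
      linear_combination (norm := module) key
    rcases smul_eq_zero.mp this with h | h
    · exact hroot c h
    · exact hu0 h
  have hindep : LinearIndependent F ![u, v] := by
    rw [LinearIndependent.pair_iff' hu0]
    intro a ha
    apply hAu_ne (a - lam)
    rw [h1, ← ha]
    module
  refine ⟨u, v, hindep, h1, h2, ?_⟩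
  intro w hw hw0 c hAw
  obtain ⟨a, b, hab⟩ := Submodule.mem_span_pair.mp hw
  have hAw' : (-(a * lam) - b * mu) • u + a • v = (c * a) • u + (c * b) • v := by
    have e1 : A.mulVec w = (-(a * lam) - b * mu) • u + a • v := by
      rw [← hab, Matrix.mulVec_add, Matrix.mulVec_smul, Matrix.mulVec_smul, h1, h2]
      module
    have e2 : c • w = (c * a) • u + (c * b) • v := by
      rw [← hab]; module
    rw [← e1, ← e2]; exact hAw
  have h0 : (-(a * lam) - b * mu - c * a) • u + (a - c * b) • v = 0 := by
    linear_combination (norm := module) hAw'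
  obtain ⟨hs, ht⟩ := LinearIndependent.pair_iff.mp hindep _ _ h0
  have hb : b * (c * c + lam * c + mu) = 0 := by
    linear_combination (-1 : F) * hs - (lam + c) * ht
  rcases mul_eq_zero.mp hb with h | h
  · have ha0 : a = 0 := by rw [sub_eq_zero] at ht; rw [ht, h, mul_zero]
    exact hw0 (by rw [← hab, ha0, h]; module)
  · exact hroot c h
end

section
/- Let F be a field of characteristic ≠ 2, A ∈ Mat_n(F), and let Λ₁, ..., Λ_m be pairwise non-similar proper super-eigenvalues of A, with corresponding 2-dimensional A-invariant subspaces W₁, ..., W_m each containing no eigenvector of A. Then the sum W₁ + ⋯ + W_m is direct; in particular 2m ≤ n. -/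
open Matrix Polynomial

private lemma stmt11_aeval_quad {F : Type*} [Field F] {n : ℕ}
    (f : (Fin n → F) →ₗ[F] (Fin n → F)) (x : Fin n → F) (T D : F) :
    (aeval f (X^2 - C T * X + C D)) x = f (f x) - T • f x + D • x := by
  simp only [map_add, map_sub, _root_.map_mul, aeval_X, aeval_C, LinearMap.add_apply,
    LinearMap.sub_apply, Module.End.mul_apply, map_pow, pow_two]
  simp [Algebra.smul_def, Module.algebraMap_end_apply]

private lemma stmt11_quad_zero {F : Type*} [Field F] {n : ℕ}
    {f : (Fin n → F) →ₗ[F] (Fin n → F)} {x y : Fin n → F} {a b c d : F}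
    (hx : f x = a • x + b • y) (hy : f y = c • x + d • y) :
    (aeval f (X^2 - C (a+d) * X + C (a*d - b*c))) x = 0
      ∧ (aeval f (X^2 - C (a+d) * X + C (a*d - b*c))) y = 0 := by
  constructor
  · rw [stmt11_aeval_quad, hx, map_add, LinearMap.map_smul, LinearMap.map_smul, hx, hy]
    module
  · rw [stmt11_aeval_quad, hy, map_add, LinearMap.map_smul, LinearMap.map_smul, hx, hy]
    module

private lemma stmt11_monic {F : Type*} [Field F] (T D : F) :
    (X^2 - C T * X + C D : F[X]).Monic ∧ (X^2 - C T * X + C D : F[X]).natDegree = 2 := by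
  have he : (X^2 - C T * X + C D : F[X]) = C 1 * X^2 + C (-T) * X + C D := by
    simp [map_neg]; ring
  have hd : (X^2 - C T * X + C D : F[X]).natDegree = 2 := by
    rw [he]; exact natDegree_quadratic one_ne_zero
  refine ⟨?_, hd⟩
  rw [Monic, leadingCoeff, hd]
  simp [coeff_X_pow, coeff_C]

private lemma stmt11_ker_mono {F : Type*} [Field F] {n : ℕ}
    (f : (Fin n → F) →ₗ[F] (Fin n → F)) {p q : F[X]} (hpq : p ∣ q) :
    LinearMap.ker (aeval f p) ≤ LinearMap.ker (aeval f q) := by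
  obtain ⟨r, rfl⟩ := hpq
  intro x hx
  rw [LinearMap.mem_ker] at hx ⊢
  rw [mul_comm, _root_.map_mul, Module.End.mul_apply, hx, map_zero]

theorem stmt_11 {F : Type*} [Field F] (hchar : (2 : F) ≠ 0) {n m : ℕ}
    (A : Matrix (Fin n) (Fin n) F)
    (Λ : Fin m → Matrix (Fin 2) (Fin 2) F) (u v : Fin m → Fin n → F)
    (hind : ∀ i, LinearIndependent F ![u i, v i])
    (hu : ∀ i, A.mulVec (u i) = Λ i 0 0 • u i + Λ i 0 1 • v i)
    (hv : ∀ i, A.mulVec (v i) = Λ i 1 0 • u i + Λ i 1 1 • v i)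
    (hproper : ∀ i, ∀ w ∈ Submodule.span F {u i, v i}, w ≠ 0 → ∀ c : F, A.mulVec w ≠ c • w)
    (hns : ∀ i j, i ≠ j →
      ¬ ∃ P : (Matrix (Fin 2) (Fin 2) F)ˣ,
          Λ j = (P : Matrix (Fin 2) (Fin 2) F) * Λ i * (↑P⁻¹ : Matrix (Fin 2) (Fin 2) F)) :
    iSupIndep (fun i => Submodule.span F {u i, v i}) ∧ 2 * m ≤ n := by
  classical
  set f : (Fin n → F) →ₗ[F] (Fin n → F) := Matrix.mulVecLin A with hf
  set T : Fin m → F := fun i => Λ i 0 0 + Λ i 1 1 with hT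
  set D : Fin m → F := fun i => Λ i 0 0 * Λ i 1 1 - Λ i 0 1 * Λ i 1 0 with hD
  set p : Fin m → F[X] := fun i => X^2 - C (T i) * X + C (D i) with hp
  set W : Fin m → Submodule F (Fin n → F) := fun i => Submodule.span F {u i, v i} with hW
  have memu : ∀ i, u i ∈ W i := fun i =>
    Submodule.subset_span (Set.mem_insert _ _)
  have memv : ∀ i, v i ∈ W i := fun i =>
    Submodule.subset_span (Set.mem_insert_of_mem _ rfl)
  have hfu : ∀ i, f (u i) = Λ i 0 0 • u i + Λ i 0 1 • v i := fun i => by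
    rw [hf, Matrix.mulVecLin_apply, hu]
  have hfv : ∀ i, f (v i) = Λ i 1 0 • u i + Λ i 1 1 • v i := fun i => by
    rw [hf, Matrix.mulVecLin_apply, hv]
  have hquad : ∀ i, (aeval f (p i)) (u i) = 0 ∧ (aeval f (p i)) (v i) = 0 := fun i =>
    stmt11_quad_zero (hfu i) (hfv i)
  set K : Fin m → Submodule F (Fin n → F) :=
    fun i => LinearMap.ker (aeval f (p i)) with hK
  have hWK : ∀ i, W i ≤ K i := by
    intro i
    rw [hW, Submodule.span_le]
    rintro w hw
    rcases hw with rfl | rfl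
    · exact (hquad i).1
    · exact (hquad i).2
  -- no roots
  have hnoroot : ∀ i (t : F), ¬(p i).IsRoot t := by
    intro i t ht
    have hroot : t^2 - T i * t + D i = 0 := by
      have := ht
      simpa [hp, IsRoot, eval_add, eval_sub, eval_mul, eval_pow] using this
    set μ := T i - t with hμ
    have hDt : D i = t * μ := by rw [hμ]; linear_combination hroot
    set w := f (u i) - μ • u i with hw
    have hffu : f (f (u i)) = T i • f (u i) - D i • u i := by
      have h0 := (hquad i).1
      rw [hp, stmt11_aeval_quad] at h0
      have := sub_eq_zero.mpr h0.symm
      linear_combination (norm := module) h0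
    have hfw : f w = t • w := by
      rw [hw, map_sub, LinearMap.map_smul, hffu, hDt]
      rw [hμ]
      module
    have hwW : w ∈ W i := by
      rw [hw]
      refine sub_mem ?_ (Submodule.smul_mem _ _ (memu i))
      rw [hfu]
      exact add_mem (Submodule.smul_mem _ _ (memu i)) (Submodule.smul_mem _ _ (memv i))
    by_cases hw0 : w = 0
    · have hune : u i ≠ 0 := by
        have := (hind i).ne_zero 0
        simpa using this
      apply hproper i (u i) (memu i) hune μ
      rw [← Matrix.mulVecLin_apply, ← hf]
      rw [hw] at hw0
      exact sub_eq_zero.mp hw0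
    · apply hproper i w hwW hw0 t
      rw [← Matrix.mulVecLin_apply, ← hf]
      exact hfw
  have hmonic : ∀ i, (p i).Monic := fun i => (stmt11_monic (T i) (D i)).1
  have hdeg : ∀ i, (p i).natDegree = 2 := fun i => (stmt11_monic (T i) (D i)).2
  have hirr : ∀ i, Irreducible (p i) := by
    intro i
    rw [(hmonic i).irreducible_iff_roots_eq_zero_of_degree_le_three
      (by rw [hdeg i]) (by rw [hdeg i]; norm_num)]
    rw [Multiset.eq_zero_iff_forall_notMem]
    intro t ht
    exact hnoroot i t ((mem_roots (hmonic i).ne_zero).mp ht)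
  have hc10 : ∀ i, Λ i 1 0 ≠ 0 := by
    intro i h
    apply hnoroot i (Λ i 0 0)
    simp only [hp, IsRoot, eval_add, eval_sub, eval_mul, eval_pow, eval_X, eval_C, hT, hD, h]
    ring
  -- distinct polynomials
  have hpne : ∀ i j, i ≠ j → p i ≠ p j := by
    intro i j hij hpe
    apply hns i j hij
    have hTe : T i = T j := by
      have h1 := congrArg (fun q => coeff q 1) hpe
      simp only [hp, coeff_add, coeff_sub, coeff_C_mul, coeff_X, coeff_X_pow, coeff_C] at h1
      simpa using h1
    have hDe : D i = D j := by
      have h0 := congrArg (fun q => coeff q 0) hpe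
      simp only [hp, coeff_add, coeff_sub, coeff_C_mul, coeff_X, coeff_X_pow, coeff_C] at h0
      simpa using h0
    set B : Fin m → Matrix (Fin 2) (Fin 2) F := fun k => !![1, Λ k 0 0; 0, Λ k 1 0] with hB
    have hBu : ∀ k, IsUnit (B k) := by
      intro k
      rw [Matrix.isUnit_iff_isUnit_det]
      rw [hB]
      simp [Matrix.det_fin_two_of]
      exact hc10 k
    have hcomm : ∀ k, Λ k * B k = B k * !![0, -(D k); 1, T k] := by
      intro k
      rw [hB, hT, hD]
      ext a c
      fin_cases a <;> fin_cases c <;>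
        simp [Matrix.mul_apply, Fin.sum_univ_two] <;> ring
    obtain ⟨Ui, hUi⟩ := hBu i
    obtain ⟨Uj, hUj⟩ := hBu j
    refine ⟨Uj * Ui⁻¹, ?_⟩
    set Cc : Matrix (Fin 2) (Fin 2) F := !![0, -(D i); 1, T i] with hCc
    have hCi : Λ i * Ui.val
        = Ui.val * Cc := by
      rw [hUi, hCc]; exact hcomm i
    have hCj : Λ j * Uj.val
        = Uj.val * Cc := by
      rw [hUj, hCc, hDe, hTe]; exact hcomm j
    have e1 : Ui.val * (Ui⁻¹).val = 1 := Ui.mul_inv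
    have e2 : (Ui⁻¹).val * Ui.val = 1 := Ui.inv_mul
    have e3 : Uj.val * (Uj⁻¹).val = 1 := Uj.mul_inv
    have hVi : (Ui⁻¹).val * Λ i = Cc * (Ui⁻¹).val := by
      calc (Ui⁻¹).val * Λ i
          = (Ui⁻¹).val * Λ i * (Ui.val * (Ui⁻¹).val) := by
            rw [e1, mul_one]
        _ = (Ui⁻¹).val * (Λ i * Ui.val) * (Ui⁻¹).val := by simp only [mul_assoc]
        _ = (Ui⁻¹).val * (Ui.val * Cc) * (Ui⁻¹).val := by rw [hCi]
        _ = ((Ui⁻¹).val * Ui.val) * (Cc * (Ui⁻¹).val) := by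
            simp only [mul_assoc]
        _ = Cc * (Ui⁻¹).val := by rw [e2, one_mul]
    have hmain : Λ j * (Uj.val * (Ui⁻¹).val)
        = (Uj.val * (Ui⁻¹).val) * Λ i := by
      rw [← mul_assoc, hCj, mul_assoc, ← hVi, ← mul_assoc]
    have h5 : (Uj.val * (Ui⁻¹).val)
        * (Ui.val * (Uj⁻¹).val) = 1 := by
      rw [mul_assoc, ← mul_assoc (Ui⁻¹).val, e2, one_mul, e3]
    have hcoe1 : (Uj * Ui⁻¹).val
        = Uj.val * (Ui⁻¹).val := rfl
    have hcoe2 : ((Uj * Ui⁻¹)⁻¹).val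
        = Ui.val * (Uj⁻¹).val := by
      rw [_root_.mul_inv_rev, inv_inv]; rfl
    rw [hcoe1, hcoe2]
    calc Λ j = Λ j * ((Uj.val * (Ui⁻¹).val)
          * (Ui.val * (Uj⁻¹).val)) := by rw [h5, mul_one]
      _ = Λ j * (Uj.val * (Ui⁻¹).val)
          * (Ui.val * (Uj⁻¹).val) := by rw [← mul_assoc]
      _ = Uj.val * (Ui⁻¹).val * Λ i
          * (Ui.val * (Uj⁻¹).val) := by rw [hmain]
  -- coprimality
  have hcop : ∀ i j, i ≠ j → IsCoprime (p i) (p j) := by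
    intro i j hij
    rw [(hirr i).coprime_iff_not_dvd]
    intro hdvd
    have hassoc := associated_of_dvd_of_natDegree_le hdvd (hmonic j).ne_zero
      (by rw [hdeg i, hdeg j])
    exact hpne i j hij (eq_of_monic_of_associated (hmonic i) (hmonic j) hassoc)
  -- independence of kernels
  have hKind : iSupIndep K := by
    intro i
    refine Disjoint.mono_right ?_ (Polynomial.disjoint_ker_aeval_of_isCoprime f
      (q := ∏ j ∈ Finset.univ.erase i, p j) ?_)
    · refine iSup_le fun j => iSup_le fun hj => ?_
      exact stmt11_ker_mono f (Finset.dvd_prod_of_mem p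
        (Finset.mem_erase.mpr ⟨hj, Finset.mem_univ j⟩))
    · exact IsCoprime.prod_right fun j hj =>
        hcop i j (fun h => (Finset.mem_erase.mp hj).1 h.symm)
  have hWind : iSupIndep W := hKind.mono hWK
  refine ⟨hWind, ?_⟩
  -- linear independence of the 2m vectors
  set x : Fin m × Fin 2 → Fin n → F := fun q => ![u q.1, v q.1] q.2 with hx
  have hxli : LinearIndependent F x := by
    rw [Fintype.linearIndependent_iff]
    intro c hc
    set w : Fin m → Fin n → F := fun i => c (i,0) • u i + c (i,1) • v i with hwdef
    have hsum : ∑ i, w i = 0 := by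
      rw [← hc, Fintype.sum_prod_type]
      refine Finset.sum_congr rfl fun i _ => ?_
      rw [Fin.sum_univ_two]
      simp [hx, hwdef]
    have hwW : ∀ i, w i ∈ W i := fun i =>
      add_mem (Submodule.smul_mem _ _ (memu i)) (Submodule.smul_mem _ _ (memv i))
    have hw0 : ∀ i, w i = 0 := by
      intro i
      have h1 : w i ∈ K i := hWK i (hwW i)
      have h2 : w i ∈ ⨆ j, ⨆ _ : j ≠ i, K j := by
        have heq : w i = -∑ j ∈ Finset.univ.erase i, w j := by
          have h3 := Finset.sum_erase_add Finset.univ w (Finset.mem_univ i)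
          rw [hsum] at h3
          exact eq_neg_of_add_eq_zero_right h3
        rw [heq]
        refine neg_mem (Submodule.sum_mem _ fun j hj => ?_)
        have hji : j ≠ i := (Finset.mem_erase.mp hj).1
        exact le_iSup₂ (f := fun j (_ : j ≠ i) => K j) j hji (hWK j (hwW j))
      have := (hKind i).le_bot ⟨h1, h2⟩
      simpa using this
    rintro ⟨i, k⟩
    have h2 := (Fintype.linearIndependent_iff.mp (hind i)) (fun k => c (i,k)) ?_
    · exact h2 k
    · rw [Fin.sum_univ_two]
      simpa using hw0 i
  have hcard := hxli.fintype_card_le_finrank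
  rwa [Fintype.card_prod, Fintype.card_fin, Fintype.card_fin,
    Module.finrank_fin_fun, mul_comm] at hcard
end
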